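/- Let s, t ≥ 1 and let 𝛂 = (α₁,…,α_s) ∈ 𝔻^s and 𝛃 = (β₁,…,β_t) ∈ 𝔻^t be indices. Then for every odd prime p with s + t < p, the following congruence holds in ℤ/pℤ: ∑_{0<m₁<⋯<m_s<p, 0<n₁<⋯<n_t<p, m_s+n_t<p} (∏_{i=1}^{s} sgn(αᵢ)^{mᵢ}·mᵢ^{−|αᵢ|}) · (∏_{j=1}^{t} sgn(βⱼ)^{nⱼ}·nⱼ^{−|βⱼ|}) = sgn(𝛃)·(−1)^{wt(𝛃)}·Z_p(α₁,…,α_s,β_t,…,β₁), where on the right the index is the concatenation of 𝛂 with the reversal of 𝛃. -/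

import Mathlib

/-!
The reflection `n ↦ p - n` reverses the order of `{1, …, p - 1}` and, because `x ^ p = x` in
`ZMod p`, multiplies `sgn(β) ^ n * n ^ (-|β|)` by `sgn(β) * (-1) ^ |β|`. Reflecting the second
tuple therefore matches the pairs `(m, n)` with `m_s + n_t < p` bijectively with the increasing
tuples `m₁ < ⋯ < m_s < p - n_t < ⋯ < p - n₁`, which index `Z_p(𝛂, reverse 𝛃)`.
-/

open Finset

def isgn (a : ℤ) : ℤ := if 0 < a then 1 else -1

def sgnIdx (a : List ℤ) : ℤ := (a.map isgn).prod

def Zp (p : ℕ) (a : List ℤ) : ZMod p :=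
  ∑ m ∈ ((Fintype.piFinset fun _ : Fin a.length => Finset.Ioo 0 p).filter
      fun m => ∀ i j : Fin a.length, i < j → m i < m j),
    ∏ i, ((isgn (a.get i) : ZMod p) ^ m i * ((m i : ZMod p) ^ (a.get i).natAbs)⁻¹)

noncomputable def SgnSet (i j : ℕ) : Finset (List ℤ) :=
  ((Fintype.piFinset fun _ : Fin (i + 1) => Finset.Icc (-(i + j + 1 : ℤ)) (i + j + 1)).filter
      fun a => (∀ l, a l ≠ 0) ∧ ∑ l, |a l| = (i + j + 1 : ℤ)).image List.ofFn

def zpTerm (p : ℕ) (x : ℤ) (n : ℕ) : ZMod p :=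
  (isgn x : ZMod p) ^ n * ((n : ZMod p) ^ x.natAbs)⁻¹

lemma isgn_mul_self (x : ℤ) : isgn x * isgn x = 1 := by
  unfold isgn; split <;> rfl

lemma zpTerm_tsub {p : ℕ} [Fact p.Prime] (x : ℤ) {n : ℕ} (hn : n ≤ p) :
    zpTerm p x (p - n) = isgn x * (-1) ^ x.natAbs * zpTerm p x n := by
  have hsq : (isgn x : ZMod p) * isgn x = 1 := by
    rw [← Int.cast_mul, isgn_mul_self, Int.cast_one]
  have hpow : (isgn x : ZMod p) ^ (p - n) = isgn x * (isgn x) ^ n := by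
    calc (isgn x : ZMod p) ^ (p - n)
        = (isgn x) ^ (p - n) * ((isgn x) ^ n * (isgn x) ^ n) := by
          rw [← mul_pow, hsq, one_pow, mul_one]
      _ = isgn x * (isgn x) ^ n := by
          rw [← mul_assoc, ← pow_add, Nat.sub_add_cancel hn, ZMod.pow_card]
  have hneg : ((p - n : ℕ) : ZMod p) = -n := by simp [Nat.cast_sub hn]
  rw [zpTerm, zpTerm, hpow, hneg, neg_pow, mul_inv, ← inv_pow, inv_neg_one]
  ring

lemma List.ofFn_comp_rev {α : Type*} {n : ℕ} (f : Fin n → α) :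
    List.ofFn (fun i => f i.rev) = (List.ofFn f).reverse := by
  apply List.ext_getElem (by simp)
  intro i h1 h2
  simp only [List.getElem_ofFn, List.getElem_reverse, List.length_ofFn]
  congr 1; ext; simp only [Fin.val_rev]; omega

lemma Fin.strictMono_append_iff {α : Type*} [Preorder α] {u v : ℕ} (f : Fin (u + 1) → α)
    (g : Fin (v + 1) → α) :
    StrictMono (Fin.append f g) ↔ StrictMono f ∧ StrictMono g ∧ f (Fin.last u) < g 0 := by
  refine ⟨fun h => ⟨?_, ?_, ?_⟩, fun ⟨hf, hg, hlt⟩ i j hij => ?_⟩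
  · simpa [Function.comp_def] using h.comp (Fin.strictMono_castAdd (v + 1))
  · simpa [Function.comp_def] using h.comp (Fin.strictMono_natAdd (u + 1))
  · simpa using @h (Fin.castAdd (v + 1) (Fin.last u)) (Fin.natAdd (u + 1) 0) (by simp [Fin.lt_def])
  · induction i using Fin.addCases <;> induction j using Fin.addCases
    all_goals simp only [Fin.append_left, Fin.append_right]
    all_goals simp only [Fin.lt_def, Fin.val_castAdd, Fin.val_natAdd] at hij
    · exact hf hij
    · exact (hf.monotone (Fin.le_last _)).trans_lt (hlt.trans_le (hg.monotone (Fin.zero_le _)))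
    · omega
    · exact hg (by omega)

lemma StrictMono.tsub_comp_rev {k p : ℕ} {n : Fin k → ℕ} (hn : StrictMono n)
    (hle : ∀ j, n j ≤ p) : StrictMono fun j : Fin k => p - n j.rev := by
  intro i j hij
  show p - n i.rev < p - n j.rev
  have := hn (Fin.rev_lt_rev.2 hij)
  have := hle i.rev
  omega

def incTuples (L p : ℕ) : Finset (Fin L → ℕ) :=
  {m ∈ Fintype.piFinset fun _ : Fin L => Ioo 0 p | ∀ i j, i < j → m i < m j}

lemma mem_incTuples {L p : ℕ} {m : Fin L → ℕ} :
    m ∈ incTuples L p ↔ (∀ i, 0 < m i ∧ m i < p) ∧ StrictMono m := by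
  simp [incTuples, StrictMono]

def pairTuples (u v p : ℕ) : Finset ((Fin (u + 1) → ℕ) × (Fin (v + 1) → ℕ)) :=
  ((Fintype.piFinset fun _ : Fin (u + 1) => Ioo 0 p) ×ˢ
      (Fintype.piFinset fun _ : Fin (v + 1) => Ioo 0 p)).filter
    fun mn => (∀ i j : Fin (u + 1), i < j → mn.1 i < mn.1 j) ∧
      (∀ i j : Fin (v + 1), i < j → mn.2 i < mn.2 j) ∧
      mn.1 (Fin.last u) + mn.2 (Fin.last v) < p

lemma mem_pairTuples {u v p : ℕ} {m : Fin (u + 1) → ℕ} {n : Fin (v + 1) → ℕ} :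
    (m, n) ∈ pairTuples u v p ↔ ((∀ i, 0 < m i ∧ m i < p) ∧ StrictMono m) ∧
      ((∀ j, 0 < n j ∧ n j < p) ∧ StrictMono n) ∧ m (Fin.last u) + n (Fin.last v) < p := by
  simp only [pairTuples, mem_filter, mem_product, Fintype.mem_piFinset, mem_Ioo, StrictMono]
  tauto

lemma sum_pairTuples_eq_sum_incTuples {M : Type*} [AddCommMonoid M] (u v p : ℕ)
    (F : (Fin (u + 1 + (v + 1)) → ℕ) → M) :
    ∑ mn ∈ pairTuples u v p, F (Fin.append mn.1 fun j => p - mn.2 j.rev) =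
      ∑ f ∈ incTuples _ p, F f := by
  refine sum_nbij' (fun mn => Fin.append mn.1 fun j => p - mn.2 j.rev)
    (fun f => (fun i => f (Fin.castAdd _ i), fun j => p - f (Fin.natAdd _ j.rev)))
    ?_ ?_ ?_ ?_ fun _ _ => rfl
  · rintro ⟨m, n⟩ hmn
    obtain ⟨⟨hm, hm_mono⟩, ⟨hn, hn_mono⟩, hlast⟩ := mem_pairTuples.1 hmn
    refine mem_incTuples.2 ⟨fun k => ?_, (Fin.strictMono_append_iff _ _).2 ⟨hm_mono, ?_, ?_⟩⟩
    · induction k using Fin.addCases with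
      | left i => simpa using hm i
      | right j => simp only [Fin.append_right]; have := hn j.rev; omega
    · exact hn_mono.tsub_comp_rev fun j => (hn j).2.le
    · simp only [Fin.rev_zero]; omega
  · intro f hf
    obtain ⟨hf_mem, hf_mono⟩ := mem_incTuples.1 hf
    rw [← Fin.append_castAdd_natAdd (f := f), Fin.strictMono_append_iff] at hf_mono
    obtain ⟨hl, hr, hlt⟩ := hf_mono
    refine mem_pairTuples.2 ⟨⟨fun i => hf_mem _, hl⟩,
      ⟨fun j => ?_, hr.tsub_comp_rev fun j => (hf_mem _).2.le⟩, ?_⟩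
    · have := hf_mem (Fin.natAdd _ j.rev); omega
    · have := hf_mem (Fin.natAdd (u + 1) 0); simp only [Fin.rev_last]; omega
  · rintro ⟨m, n⟩ hmn
    have hn := (mem_pairTuples.1 hmn).2.1.1
    simp only [Fin.append_left, Fin.append_right, Fin.rev_rev, Prod.mk.injEq, true_and]
    funext j; have := hn j; omega
  · intro f hf
    have hf_mem := (mem_incTuples.1 hf).1
    conv_rhs => rw [← Fin.append_castAdd_natAdd (f := f)]
    congr 1; funext j; simp only [Fin.rev_rev]; have := hf_mem (Fin.natAdd _ j); omega

lemma Zp_eq_of_length_eq (p : ℕ) {l : List ℤ} {L : ℕ} (h : l.length = L) :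
    Zp p l = ∑ m ∈ incTuples L p, ∏ i, zpTerm p (l.get (i.cast h.symm)) (m i) := by
  subst h; rfl

lemma Zp_ofFn (p : ℕ) {L : ℕ} (d : Fin L → ℤ) :
    Zp p (List.ofFn d) = ∑ m ∈ incTuples L p, ∏ i, zpTerm p (d i) (m i) := by
  simp [Zp_eq_of_length_eq p (List.length_ofFn (f := d))]

lemma sgnIdx_ofFn {R : Type*} [CommRing R] {k : ℕ} (b : Fin k → ℤ) :
    (sgnIdx (List.ofFn b) : R) = ∏ j, (isgn (b j) : R) := by
  simp [sgnIdx, List.map_ofFn, List.prod_ofFn]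

lemma prod_zpTerm_eq_prod_zpTerm_tsub_rev {p k : ℕ} [Fact p.Prime] (b : Fin k → ℤ)
    {n : Fin k → ℕ} (hn : ∀ j, n j ≤ p) :
    ∏ j, zpTerm p (b j) (n j) =
      sgnIdx (List.ofFn b) * (-1) ^ (∑ j, (b j).natAbs) *
        ∏ j : Fin k, zpTerm p (b j.rev) (p - n j.rev) := by
  have hreflect j : zpTerm p (b j) (n j) =
      isgn (b j) * (-1) ^ (b j).natAbs * zpTerm p (b j) (p - n j) := by
    rw [← zpTerm_tsub _ (Nat.sub_le p (n j)), Nat.sub_sub_self (hn j)]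
  rw [prod_congr rfl fun j _ => hreflect j, prod_mul_distrib, prod_mul_distrib,
    prod_pow_eq_pow_sum, sgnIdx_ofFn]
  exact congrArg _ (Equiv.prod_comp Fin.revPerm fun j => zpTerm p (b j) (p - n j)).symm

theorem stmt_3_general (s t : ℕ) (a : Fin (s + 1) → ℤ) (b : Fin (t + 1) → ℤ)
    (p : ℕ) (hp : p.Prime) :
    (∑ mn ∈ (((Fintype.piFinset fun _ : Fin (s + 1) => Finset.Ioo 0 p) ×ˢ
          (Fintype.piFinset fun _ : Fin (t + 1) => Finset.Ioo 0 p)).filter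
        fun mn => (∀ i j : Fin (s + 1), i < j → mn.1 i < mn.1 j) ∧
          (∀ i j : Fin (t + 1), i < j → mn.2 i < mn.2 j) ∧
          mn.1 (Fin.last s) + mn.2 (Fin.last t) < p),
      (∏ i, ((isgn (a i) : ZMod p) ^ mn.1 i * ((mn.1 i : ZMod p) ^ (a i).natAbs)⁻¹)) *
        ∏ j, ((isgn (b j) : ZMod p) ^ mn.2 j * ((mn.2 j : ZMod p) ^ (b j).natAbs)⁻¹)) =
    (sgnIdx (List.ofFn b) : ZMod p) * (-1 : ZMod p) ^ (∑ j, (b j).natAbs) *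
      Zp p (List.ofFn a ++ (List.ofFn b).reverse) := by
  have := Fact.mk hp
  rw [← List.ofFn_comp_rev, ← List.ofFn_fin_append, Zp_ofFn, mul_sum,
    ← sum_pairTuples_eq_sum_incTuples]
  refine sum_congr rfl fun mn hmn => ?_
  have hn j : mn.2 j ≤ p := (mem_pairTuples.1 hmn).2.1.1 j |>.2.le
  change (∏ i, zpTerm p (a i) (mn.1 i)) * ∏ j, zpTerm p (b j) (mn.2 j) = _
  rw [prod_zpTerm_eq_prod_zpTerm_tsub_rev b hn, Fin.prod_univ_add (a := s + 1)]
  simp only [Fin.append_left, Fin.append_right]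
  ring

/-- Lemma 2 of the paper.  For indices `𝛂 ∈ 𝔻^{s+1}`, `𝛃 ∈ 𝔻^{t+1}`
and every odd prime `p` with `(s+1)+(t+1) < p`, the truncated double sum over
`0 < m₁ < ⋯ < m_{s+1} < p`, `0 < n₁ < ⋯ < n_{t+1} < p` with `m_{s+1} + n_{t+1} < p`
equals `sgn(𝛃)·(−1)^{wt 𝛃}·Z_p(𝛂, reverse 𝛃)` in `ℤ/pℤ`. -/
theorem stmt_3 (s t : ℕ) (a : Fin (s + 1) → ℤ) (b : Fin (t + 1) → ℤ)
    (ha : ∀ i, a i ≠ 0) (hb : ∀ j, b j ≠ 0)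
    (p : ℕ) (hp : p.Prime) (hodd : Odd p) (hst : s + 1 + (t + 1) < p) :
    (∑ mn ∈ (((Fintype.piFinset fun _ : Fin (s + 1) => Finset.Ioo 0 p) ×ˢ
          (Fintype.piFinset fun _ : Fin (t + 1) => Finset.Ioo 0 p)).filter
        fun mn => (∀ i j : Fin (s + 1), i < j → mn.1 i < mn.1 j) ∧
          (∀ i j : Fin (t + 1), i < j → mn.2 i < mn.2 j) ∧
          mn.1 (Fin.last s) + mn.2 (Fin.last t) < p),
      (∏ i, ((isgn (a i) : ZMod p) ^ mn.1 i * ((mn.1 i : ZMod p) ^ (a i).natAbs)⁻¹)) *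
        ∏ j, ((isgn (b j) : ZMod p) ^ mn.2 j * ((mn.2 j : ZMod p) ^ (b j).natAbs)⁻¹)) =
    (sgnIdx (List.ofFn b) : ZMod p) * (-1 : ZMod p) ^ (∑ j, (b j).natAbs) *
      Zp p (List.ofFn a ++ (List.ofFn b).reverse) :=
  stmt_3_general s t a b p hp
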